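/- Let T' be a row-standard tableau of a two-column shape with columns of lengths r ≥ s, with first-column entries a'_1, …, a'_r (top to bottom, in arbitrary order) and second-column entries b'_1, …, b'_s. Let F_{T'} = (V_0, …, V_n) be the flag with V_k spanned by the basis vectors e_x for the boxes x containing entries 1, …, k, where e is a Jordan basis with u(e_i) = 0 for i ≤ r and u(e_{r+p}) = e_p. Then for all 0 ≤ i < j ≤ n, rank u|_{V_j/V_i} = #{p : 1 ≤ p ≤ s, i < a'_p and a'_p < b'_p ≤ j}. -/

import Mathlib

open Module

/-- Entry map of a two-column tableau with first-column entries `a` and second-column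
entries `b` (all 0-indexed): box `q < r` of the first column carries entry `a q`,
box `r + p` of the second column carries entry `b p`. -/
def entryOf (r s : ℕ) (a : Fin r → Fin (r + s)) (b : Fin s → Fin (r + s)) :
    Fin (r + s) → Fin (r + s) := fun x =>
  if h : x.val < r then a ⟨x.val, h⟩ else b ⟨x.val - r, by have := x.isLt; omega⟩

/-- The flag associated to a tableau with entry map `entry`: its `k`-th subspace is
spanned by the standard basis vectors whose entry is `< k` (0-indexed entries, i.e.
1-indexed entries `≤ k`). -/
noncomputable def flagOf (K : Type*) [Field K] (n : ℕ) (entry : Fin n → Fin n) (k : ℕ) :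
    Submodule K (Fin n → K) :=
  Submodule.span K ((fun x => Pi.single x (1 : K)) '' {x | (entry x).val < k})

/-- The endomorphism induced by `u` on the quotient `Vj / Vi` of two `u`-stable
subspaces (here `Vi` is viewed as the submodule `Vi.comap Vj.subtype` of `Vj`). -/
noncomputable def inducedMap {K V : Type*} [Field K] [AddCommGroup V] [Module K V]
    (u : Module.End K V) (Vi Vj : Submodule K V)
    (hj : ∀ x ∈ Vj, u x ∈ Vj) (hi : ∀ x ∈ Vi, u x ∈ Vi) :
    (Vj ⧸ Vi.comap Vj.subtype) →ₗ[K] (Vj ⧸ Vi.comap Vj.subtype) :=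
  Submodule.mapQ _ _ (LinearMap.restrict u hj) (fun x hx => by
    simp only [Submodule.mem_comap, LinearMap.restrict_coe_apply] at hx ⊢
    exact hi _ hx)


lemma entryOf_lt (r s : ℕ) (a : Fin r → Fin (r + s)) (b : Fin s → Fin (r + s))
    (x : Fin (r + s)) (h : x.val < r) :
    entryOf r s a b x = a ⟨x.val, h⟩ := dif_pos h

lemma entryOf_ge (r s : ℕ) (a : Fin r → Fin (r + s)) (b : Fin s → Fin (r + s))
    (x : Fin (r + s)) (h : ¬ x.val < r) :
    entryOf r s a b x = b ⟨x.val - r, by have := x.isLt; omega⟩ := dif_neg h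

section Aux
variable {K : Type*} [Field K]

def suppM (K : Type*) [Field K] (n : ℕ) (A : Set (Fin n)) : Submodule K (Fin n → K) where
  carrier := {v | ∀ x, x ∉ A → v x = 0}
  add_mem' := fun {v w} hv hw x hx => by simp [hv x hx, hw x hx]
  zero_mem' := fun x _ => rfl
  smul_mem' := fun c v hv x hx => by simp [hv x hx]

lemma mem_suppM {n : ℕ} {A : Set (Fin n)} {v : Fin n → K} :
    v ∈ suppM K n A ↔ ∀ x, x ∉ A → v x = 0 := Iff.rfl

lemma eq_sum_single {n : ℕ} (v : Fin n → K) :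
    v = ∑ x : Fin n, v x • (Pi.single x (1 : K) : Fin n → K) := by
  funext y
  simp [Finset.sum_apply, Pi.single_apply]

lemma span_single_eq_suppM (n : ℕ) (A : Set (Fin n)) :
    Submodule.span K ((fun x => Pi.single x (1 : K)) '' A) = suppM K n A := by
  apply le_antisymm
  · rw [Submodule.span_le]
    rintro _ ⟨x, hx, rfl⟩ y hy
    have hne : y ≠ x := fun h => hy (h ▸ hx)
    exact Pi.single_eq_of_ne hne 1
  · intro v hv
    rw [eq_sum_single v]
    refine Submodule.sum_mem _ fun x _ => ?_
    by_cases hx : x ∈ A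
    · exact Submodule.smul_mem _ _ (Submodule.subset_span ⟨x, hx, rfl⟩)
    · rw [hv x hx, zero_smul]; exact Submodule.zero_mem _

lemma single_injective (n : ℕ) :
    Function.Injective (fun x : Fin n => Pi.single x (1 : K)) := by
  intro x y h
  by_contra hxy
  have := congrFun h x
  simp [Pi.single_apply, hxy] at this

lemma li_single (n : ℕ) :
    LinearIndependent K (fun x : Fin n => Pi.single x (1 : K)) := by
  have h := (Pi.basisFun K (Fin n)).linearIndependent
  have he : (fun x : Fin n => Pi.single x (1 : K)) = ⇑(Pi.basisFun K (Fin n)) := by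
    funext x
    rw [Pi.basisFun_apply]
  rw [he]
  exact h

set_option maxHeartbeats 1000000 in
lemma finrank_suppM (n : ℕ) (A : Set (Fin n)) :
    finrank K ↥(suppM K n A) = A.ncard := by
  classical
  rw [← span_single_eq_suppM]
  have h1 : LinearIndependent K (fun x : A => Pi.single (x : Fin n) (1 : K) : A → Fin n → K) :=
    (li_single n).comp Subtype.val Subtype.val_injective
  have hli := LinearIndepOn.id_image (s := A) (v := fun x : Fin n => Pi.single x (1 : K)) h1
  haveI : Fintype ((fun x : Fin n => Pi.single x (1 : K)) '' A) :=
    (A.toFinite.image _).fintype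
  rw [finrank_span_set_eq_card hli]
  rw [← Set.ncard_eq_toFinset_card']
  exact Set.ncard_image_of_injective A (single_injective n)

lemma u_apply (r s : ℕ) (u : Module.End K (Fin (r + s) → K))
    (hu : ∀ x : Fin (r + s), u (Pi.single x 1) =
      if h : r ≤ x.val then Pi.single (⟨x.val - r, Nat.lt_of_le_of_lt (Nat.sub_le _ _) x.isLt⟩ : Fin (r + s)) 1
      else 0)
    (v : Fin (r + s) → K) (q : Fin (r + s)) :
    u v q = if h : q.val < s then v ⟨r + q.val, by omega⟩ else 0 := by
  conv_lhs => rw [eq_sum_single v]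
  rw [map_sum, Finset.sum_apply]
  simp_rw [map_smul, hu]
  by_cases hq : q.val < s
  · rw [dif_pos hq]
    refine (Finset.sum_eq_single_of_mem (⟨r + q.val, by omega⟩ : Fin (r + s))
      (Finset.mem_univ _) ?_).trans ?_
    · intro x _ hx
      rw [Pi.smul_apply]
      by_cases hr : r ≤ x.val
      · rw [dif_pos hr]
        have h0 : (Pi.single (⟨x.val - r, by have := x.isLt; omega⟩ : Fin (r + s)) (1 : K) : Fin (r+s) → K) q
            = 0 := by
          apply Pi.single_eq_of_ne
          intro hqe
          apply hx
          apply Fin.ext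
          have := congrArg Fin.val hqe
          simp only [Fin.val_mk] at this
          simp
          omega
        rw [h0, smul_zero]
      · rw [dif_neg hr, Pi.zero_apply, smul_zero]
    · rw [Pi.smul_apply, dif_pos (show r ≤ r + q.val by omega)]
      have h1 : (Pi.single (⟨r + q.val - r, by omega⟩ : Fin (r + s)) (1 : K) : Fin (r+s) → K) q = 1 := by
        have he : (⟨r + q.val - r, by omega⟩ : Fin (r + s)) = q := by
          apply Fin.ext; simp
        rw [he, Pi.single_eq_same]
      rw [h1, smul_eq_mul, mul_one]
  · rw [dif_neg hq]
    apply Finset.sum_eq_zero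
    intro x _
    rw [Pi.smul_apply]
    by_cases hr : r ≤ x.val
    · rw [dif_pos hr]
      have h0 : (Pi.single (⟨x.val - r, by have := x.isLt; omega⟩ : Fin (r + s)) (1 : K) : Fin (r+s) → K) q
          = 0 := by
        apply Pi.single_eq_of_ne
        intro hqe
        have := congrArg Fin.val hqe
        simp only [Fin.val_mk] at this
        have hx := x.isLt
        omega
      rw [h0, smul_zero]
    · rw [dif_neg hr, Pi.zero_apply, smul_zero]

end Aux

set_option maxHeartbeats 4000000 in
/-- for a row-standard two-column tableau `T'` (first-column entries `a`,
second-column entries `b`, 0-indexed) and the associated flag `F_{T'}` = `flagOf`,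
the rank of the induced map `u|_{V_j/V_i}` equals
`#{p : 1 ≤ p ≤ s, i < a'_p and a'_p < b'_p ≤ j}` (1-indexed entries `a'_p = a p + 1`,
`b'_p = b p + 1`). -/
theorem stmt11 (K : Type*) [Field K] (r s : ℕ) (hrs : s ≤ r)
    (u : Module.End K (Fin (r + s) → K))
    (hu : ∀ x : Fin (r + s), u (Pi.single x 1) =
      if h : r ≤ x.val then Pi.single (⟨x.val - r, by have := x.isLt; omega⟩ : Fin (r + s)) 1
      else 0)
    (a : Fin r → Fin (r + s)) (b : Fin s → Fin (r + s))
    (hbij : Function.Bijective (entryOf r s a b))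
    (hrow : ∀ p : Fin s, a (Fin.castLE hrs p) < b p)
    (hstab : ∀ k : ℕ, ∀ x ∈ flagOf K (r + s) (entryOf r s a b) k,
      u x ∈ flagOf K (r + s) (entryOf r s a b) k)
    (i j : ℕ) (hij : i < j) (hj : j ≤ r + s) :
    finrank K ↥(LinearMap.range (inducedMap u
        (flagOf K (r + s) (entryOf r s a b) i) (flagOf K (r + s) (entryOf r s a b) j)
        (hstab j) (hstab i)))
      = Set.ncard {p : Fin s | i < (a (Fin.castLE hrs p)).val + 1 ∧
          (a (Fin.castLE hrs p)).val < (b p).val ∧ (b p).val + 1 ≤ j} := by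
  classical
  set entry := entryOf r s a b with hentry
  set Vi := flagOf K (r + s) entry i with hVi
  set Vj := flagOf K (r + s) entry j with hVj
  set P : Set (Fin s) := {p : Fin s | i < (a (Fin.castLE hrs p)).val + 1 ∧
      (a (Fin.castLE hrs p)).val < (b p).val ∧ (b p).val + 1 ≤ j} with hP
  -- sets of indices
  set Sj : Set (Fin (r + s)) := {x | (entry x).val < j} with hSj
  set Si : Set (Fin (r + s)) := {x | (entry x).val < i} with hSi
  set KS : Set (Fin (r + s)) := {x | (entry x).val < j ∧
      ∀ _ : r ≤ x.val, (entry ⟨x.val - r, by have := x.isLt; omega⟩).val < i} with hKS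
  have hVjs : Vj = suppM K (r + s) Sj := span_single_eq_suppM _ _
  have hVis : Vi = suppM K (r + s) Si := span_single_eq_suppM _ _
  -- the map f
  set p : Submodule K ↥Vj := Vi.comap Vj.subtype with hp
  set f : ↥Vj →ₗ[K] ↥Vj ⧸ p := p.mkQ.comp (LinearMap.restrict u (hstab j)) with hf
  have hrange : LinearMap.range (inducedMap u Vi Vj (hstab j) (hstab i))
      = LinearMap.range f := by
    have h1 : (inducedMap u Vi Vj (hstab j) (hstab i)).comp p.mkQ = f := by
      rw [hf, inducedMap, Submodule.mapQ_mkQ]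
    conv_rhs => rw [← h1]
    rw [LinearMap.range_comp, Submodule.range_mkQ, Submodule.map_top]
  -- kernel of f
  have hker : LinearMap.ker f = Submodule.comap Vj.subtype (Vj ⊓ Submodule.comap u Vi) := by
    ext x
    simp only [hf, LinearMap.mem_ker, LinearMap.coe_comp, Function.comp_apply,
      Submodule.mkQ_apply, Submodule.Quotient.mk_eq_zero, hp, Submodule.mem_comap,
      LinearMap.restrict_coe_apply, Submodule.mem_inf]
    exact ⟨fun h => ⟨x.2, h⟩, fun h => h.2⟩
  have hkerrank : finrank K ↥(LinearMap.ker f)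
      = finrank K ↥(Vj ⊓ Submodule.comap u Vi) := by
    rw [hker]
    exact (Submodule.comapSubtypeEquivOfLe inf_le_left).finrank_eq
  -- the intersection is a supp module
  have hinf : Vj ⊓ Submodule.comap u Vi = suppM K (r + s) KS := by
    rw [hVjs, hVis]
    ext v
    simp only [Submodule.mem_inf, Submodule.mem_comap, mem_suppM]
    constructor
    · rintro ⟨h1, h2⟩ x hx
      rw [hKS, Set.mem_setOf_eq] at hx
      push_neg at hx
      by_cases hxj : (entry x).val < j
      · obtain ⟨hr, hi2⟩ := hx hxj
        have hq : ¬ ((⟨x.val - r, by have := x.isLt; omega⟩ : Fin (r + s)) ∈ Si) := by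
          rw [hSi, Set.mem_setOf_eq]
          omega
        have h3 := h2 _ hq
        rw [u_apply r s u hu v] at h3
        rw [dif_pos (show (⟨x.val - r, by have := x.isLt; omega⟩ : Fin (r + s)).val < s by
          have := x.isLt; simp only [Fin.val_mk]; omega)] at h3
        have hx' : (⟨r + (x.val - r), by have := x.isLt; omega⟩ : Fin (r + s)) = x := by
          apply Fin.ext; simp only [Fin.val_mk]; omega
        rw [← hx']
        convert h3 using 2
      · exact h1 x (by rw [hSj, Set.mem_setOf_eq]; exact hxj)
    · intro hv
      refine ⟨fun x hx => hv x (fun hk => hx hk.1), fun q hq => ?_⟩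
      rw [u_apply r s u hu v]
      by_cases hqs : q.val < s
      · rw [dif_pos hqs]
        apply hv
        intro hk
        rw [hKS, Set.mem_setOf_eq] at hk
        have h4 := hk.2 (by simp only [Fin.val_mk]; omega)
        apply hq
        rw [hSi, Set.mem_setOf_eq]
        have he : (⟨(⟨r + q.val, by omega⟩ : Fin (r + s)).val - r, by
            have := q.isLt; simp only [Fin.val_mk]; omega⟩ : Fin (r + s)) = q := by
          apply Fin.ext; simp only [Fin.val_mk]; omega
        rw [he] at h4
        exact h4
      · rw [dif_neg hqs]
  -- cardinalities
  have hcount : ∀ k : ℕ, k ≤ r + s → ({x : Fin (r + s) | (entry x).val < k}).ncard = k := by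
    intro k hk
    have e1 : {x : Fin (r + s) | (entry x).val < k} = entry ⁻¹' {y : Fin (r + s) | y.val < k} :=
      rfl
    have e2 : {y : Fin (r + s) | y.val < k} = Fin.castLE hk '' Set.univ := by
      ext y
      simp only [Set.mem_setOf_eq, Set.image_univ, Set.mem_range]
      constructor
      · intro hy; exact ⟨⟨y.val, hy⟩, by apply Fin.ext; rfl⟩
      · rintro ⟨z, rfl⟩; exact z.isLt
    have e3 : {y : Fin (r + s) | y.val < k}
        = entry '' (entry ⁻¹' {y : Fin (r + s) | y.val < k}) :=
      (Set.image_preimage_eq _ hbij.surjective).symm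
    rw [e1, ← Set.ncard_image_of_injective _ hbij.injective, ← e3, e2,
      Set.ncard_image_of_injective _ (Fin.castLE_injective hk), Set.ncard_univ, Nat.card_eq_fintype_card,
      Fintype.card_fin]
  have hVjrank : finrank K ↥Vj = j := by
    rw [hVjs, finrank_suppM]
    exact hcount j hj
  -- difference set
  have hsub : KS ⊆ Sj := fun x hx => hx.1
  set g : Fin s → Fin (r + s) := fun p => ⟨r + p.val, by omega⟩ with hg
  have hginj : Function.Injective g := by
    intro p q h
    have := congrArg Fin.val h
    simp only [hg, Fin.val_mk] at this
    exact Fin.ext (by omega)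
  have hdiff : Sj \ KS = g '' P := by
    ext x
    constructor
    · rintro ⟨hx1, hx2⟩
      rw [hKS, Set.mem_setOf_eq] at hx2
      push_neg at hx2
      rw [hSj, Set.mem_setOf_eq] at hx1
      obtain ⟨hr, hi2⟩ := hx2 hx1
      have hxs : x.val - r < s := by have := x.isLt; omega
      refine ⟨⟨x.val - r, hxs⟩, ?_, ?_⟩
      · rw [hP, Set.mem_setOf_eq]
        have hcast : (Fin.castLE hrs ⟨x.val - r, hxs⟩ : Fin r) = ⟨x.val - r, by omega⟩ := by
          apply Fin.ext; rfl
        have hentx : entry x = b ⟨x.val - r, hxs⟩ := by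
          rw [hentry]
          exact entryOf_ge r s a b x (by omega)
        have hent2 : entry ⟨x.val - r, by have := x.isLt; omega⟩
            = a ⟨x.val - r, by omega⟩ := by
          rw [hentry]
          exact entryOf_lt r s a b _ (by simp only [Fin.val_mk]; omega)
        rw [hentx] at hx1
        rw [hent2] at hi2
        rw [hcast]
        refine ⟨by omega, ?_, by omega⟩
        have := hrow ⟨x.val - r, hxs⟩
        rw [hcast] at this
        omega
      · rw [hg]; apply Fin.ext; simp only [Fin.val_mk]; omega
    · rintro ⟨q, hq, rfl⟩
      rw [hP, Set.mem_setOf_eq] at hq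
      have hentg : entry (g q) = b q := by
        rw [hentry]
        rw [entryOf_ge r s a b (g q) (by simp only [hg, Fin.val_mk]; omega)]
        congr 1
        apply Fin.ext; simp only [hg, Fin.val_mk]; omega
      constructor
      · rw [hSj, Set.mem_setOf_eq, hentg]; omega
      · rw [hKS, Set.mem_setOf_eq]
        push_neg
        intro _
        refine ⟨by simp only [hg, Fin.val_mk]; omega, ?_⟩
        have he : (⟨(g q).val - r, by have := (g q).isLt; omega⟩ : Fin (r + s))
            = ⟨q.val, by omega⟩ := by
          apply Fin.ext; simp only [hg, Fin.val_mk]; omega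
        rw [he]
        have hent3 : entry ⟨q.val, by omega⟩ = a (Fin.castLE hrs q) := by
          have h5 : entryOf r s a b ⟨q.val, by omega⟩ = a (Fin.castLE hrs q) := by
            rw [entryOf_lt r s a b _ (by simp only [Fin.val_mk]; omega)]
            congr 1
          exact h5
        rw [hent3]
        omega
  -- assemble
  have hrn := LinearMap.finrank_range_add_finrank_ker f
  have hkerKS : finrank K ↥(LinearMap.ker f) = KS.ncard := by
    rw [hkerrank, hinf, finrank_suppM]
  have hdcard : (Sj \ KS).ncard = Sj.ncard - KS.ncard := Set.ncard_diff hsub (Set.toFinite _)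
  have hPcard : (g '' P).ncard = P.ncard := Set.ncard_image_of_injective _ hginj
  have hKSle : KS.ncard ≤ Sj.ncard := Set.ncard_le_ncard hsub (Set.toFinite _)
  rw [hrange]
  have hSjcard : Sj.ncard = j := hcount j hj
  rw [hVjrank, hkerKS] at hrn
  have : P.ncard = j - KS.ncard := by
    rw [← hPcard, ← hdiff, hdcard, hSjcard]
  have hfin : finrank K ↥(LinearMap.range f) + KS.ncard = j := hrn
  rw [this]
  exact Nat.eq_sub_of_add_eq hfin
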